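/- Fix a prime p and an abelian group A. Let μ₀ be a function from the compact open subsets of ℚ_p × ℚ_p contained in X₀ to A satisfying μ₀(U ∪ V) = μ₀(U) + μ₀(V) whenever U and V are disjoint compact open subsets contained in X₀. Then there exists a unique p-invariant A-valued distribution μ on X such that μ(U) = μ₀(U) for every compact open subset U ⊆ X₀. -/

import Mathlib

/-- `X := (ℚ_p × ℚ_p) \ {(0,0)}`. -/
def X (p : ℕ) [Fact p.Prime] : Set (ℚ_[p] × ℚ_[p]) := {v | v ≠ 0}

/-- The set `X₀` of primitive vectors of `ℤ_p²`. -/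
def X0 (p : ℕ) [Fact p.Prime] : Set (ℚ_[p] × ℚ_[p]) :=
  {v | ‖v.1‖ ≤ 1 ∧ ‖v.2‖ ≤ 1 ∧ (‖v.1‖ = 1 ∨ ‖v.2‖ = 1)}

/-- `p^j·U := {(p^j x, p^j y) : (x, y) ∈ U}`. -/
def pScale (p : ℕ) [Fact p.Prime] (j : ℤ) (U : Set (ℚ_[p] × ℚ_[p])) : Set (ℚ_[p] × ℚ_[p]) :=
  (fun v => ((p : ℚ_[p]) ^ j * v.1, (p : ℚ_[p]) ^ j * v.2)) '' U

/-- A compact open subset of `X`: compact and open in `ℚ_p × ℚ_p` and contained in `X`. -/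
def IsCompactOpen (p : ℕ) [Fact p.Prime] (U : Set (ℚ_[p] × ℚ_[p])) : Prop :=
  IsCompact U ∧ IsOpen U ∧ U ⊆ X p

/-- An `A`-valued distribution on `X`: additive on disjoint compact open subsets of `X`. -/
def IsDistribution (p : ℕ) [Fact p.Prime] {A : Type*} [AddCommGroup A]
    (μ : Set (ℚ_[p] × ℚ_[p]) → A) : Prop :=
  ∀ U V, IsCompactOpen p U → IsCompactOpen p V → Disjoint U V → μ (U ∪ V) = μ U + μ V

/-- `μ` is `p`-invariant: `μ(p·U) = μ(U)` for every compact open `U ⊆ X`. -/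
def IsPInvariant (p : ℕ) [Fact p.Prime] {A : Type*} [AddCommGroup A]
    (μ : Set (ℚ_[p] × ℚ_[p]) → A) : Prop :=
  ∀ U, IsCompactOpen p U → μ (pScale p 1 U) = μ U

/-!
The punctured plane `X` is the disjoint union of the shells `p^j·X₀ = {v : ‖v‖ = p^{-j}}`,
`j ∈ ℤ`, which are compact open, so a compact open `U ⊆ X` meets only finitely many of them.
A `p`-invariant distribution `μ` extending `μ₀` must give
`μ(U ∩ p^j·X₀) = μ₀(p^{-j}·(U ∩ p^j·X₀))`, and additivity then forces
`μ(U) = ∑_j μ₀(p^{-j}·(U ∩ p^j·X₀))`. Conversely this finite sum is additive in `U`, and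
replacing `U` by `p·U` only shifts the index `j`.
-/

open Function Metric Pointwise

instance Prod.instIsUltrametricDist {E F : Type*} [PseudoMetricSpace E] [PseudoMetricSpace F]
    [IsUltrametricDist E] [IsUltrametricDist F] : IsUltrametricDist (E × F) where
  dist_triangle_max x y z := by
    simp only [Prod.dist_eq]
    exact max_le
      ((IsUltrametricDist.dist_triangle_max ..).trans
        (max_le_max (le_max_left ..) (le_max_left ..)))
      ((IsUltrametricDist.dist_triangle_max ..).trans
        (max_le_max (le_max_right ..) (le_max_right ..)))

lemma IsCompact.finite_setOf_inter_nonempty {E ι : Type*} [TopologicalSpace E] {U : Set E}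
    (hU : IsCompact U) {f : ι → Set E} (hf : ∀ i, IsOpen (f i)) (hdisj : Pairwise (Disjoint on f))
    (hcov : U ⊆ ⋃ i, f i) : {i | (U ∩ f i).Nonempty}.Finite := by
  obtain ⟨t, ht⟩ := hU.elim_finite_subcover f hf hcov
  refine t.finite_toSet.subset fun i ⟨x, hxU, hxi⟩ => ?_
  obtain ⟨k, hk, hxk⟩ := Set.mem_iUnion₂.mp (ht hxU)
  obtain rfl : i = k := hdisj.eq (Set.not_disjoint_iff.mpr ⟨x, hxi, hxk⟩)
  exact hk

section AdditiveOnCompactOpens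

variable {E A : Type*} [TopologicalSpace E] [AddCommGroup A]

def IsAdditiveOnCompactOpens (Y : Set E) (μ : Set E → A) : Prop :=
  ∀ U V : Set E, IsCompact U ∧ IsOpen U ∧ U ⊆ Y → IsCompact V ∧ IsOpen V ∧ V ⊆ Y →
    Disjoint U V → μ (U ∪ V) = μ U + μ V

namespace IsAdditiveOnCompactOpens

variable {Y : Set E} {μ : Set E → A}

lemma map_empty (hμ : IsAdditiveOnCompactOpens Y μ) : μ ∅ = 0 := by
  have hempty : IsCompact (∅ : Set E) ∧ IsOpen (∅ : Set E) ∧ ∅ ⊆ Y :=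
    ⟨isCompact_empty, isOpen_empty, Set.empty_subset Y⟩
  simpa using hμ ∅ ∅ hempty hempty disjoint_bot_left

lemma map_biUnion_finset (hμ : IsAdditiveOnCompactOpens Y μ) {ι : Type*} (s : Finset ι)
    {f : ι → Set E} (hf : ∀ i ∈ s, IsCompact (f i) ∧ IsOpen (f i) ∧ f i ⊆ Y)
    (hdisj : (s : Set ι).PairwiseDisjoint f) :
    μ (⋃ i ∈ s, f i) = ∑ i ∈ s, μ (f i) := by
  classical
  induction s using Finset.induction_on with
  | empty => simpa using hμ.map_empty
  | insert a s ha ih =>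
    rw [Finset.coe_insert, Set.pairwiseDisjoint_insert] at hdisj
    have hf' : ∀ i ∈ s, IsCompact (f i) ∧ IsOpen (f i) ∧ f i ⊆ Y :=
      fun i hi => hf i (Finset.mem_insert_of_mem hi)
    have hunion : IsCompact (⋃ i ∈ s, f i) ∧ IsOpen (⋃ i ∈ s, f i) ∧ (⋃ i ∈ s, f i) ⊆ Y :=
      ⟨s.finite_toSet.isCompact_biUnion fun i hi => (hf' i hi).1,
        isOpen_biUnion fun i hi => (hf' i hi).2.1, Set.iUnion₂_subset fun i hi => (hf' i hi).2.2⟩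
    have hdisj_a : Disjoint (f a) (⋃ i ∈ s, f i) :=
      Set.disjoint_iUnion₂_right.mpr fun i hi => hdisj.2 i hi (ne_of_mem_of_not_mem hi ha).symm
    rw [Finset.set_biUnion_insert, Finset.sum_insert ha,
      hμ _ _ (hf a (Finset.mem_insert_self a s)) hunion hdisj_a, ih hf' hdisj.1]

lemma eq_finsum_inter (hμ : IsAdditiveOnCompactOpens Y μ) {ι : Type*} {f : ι → Set E}
    (hfo : ∀ i, IsOpen (f i)) (hfc : ∀ i, IsClosed (f i)) (hdisj : Pairwise (Disjoint on f))
    {U : Set E} (hUc : IsCompact U) (hUo : IsOpen U) (hUY : U ⊆ Y) (hcov : U ⊆ ⋃ i, f i) :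
    μ U = ∑ᶠ i, μ (U ∩ f i) := by
  set s := (hUc.finite_setOf_inter_nonempty hfo hdisj hcov).toFinset
  have hU : U = ⋃ i ∈ s, U ∩ f i := by
    refine subset_antisymm (fun x hx => ?_) (Set.iUnion₂_subset fun i _ => Set.inter_subset_left)
    obtain ⟨i, hi⟩ := Set.mem_iUnion.mp (hcov hx)
    exact Set.mem_biUnion (by simpa [s] using ⟨x, hx, hi⟩) ⟨hx, hi⟩
  have hsupp : support (fun i => μ (U ∩ f i)) ⊆ s := fun i hi => by
    by_contra his
    have hempty : U ∩ f i = ∅ := by simpa [s, Set.not_nonempty_iff_eq_empty] using his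
    exact hi (by simp only [hempty, hμ.map_empty])
  rw [finsum_eq_sum_of_support_subset _ hsupp]
  conv_lhs => rw [hU]
  exact hμ.map_biUnion_finset s
    (fun i _ => ⟨hUc.inter_right (hfc i), hUo.inter (hfo i), Set.inter_subset_left.trans hUY⟩)
    fun i _ j _ hij => (hdisj hij).mono Set.inter_subset_right Set.inter_subset_right

end IsAdditiveOnCompactOpens

end AdditiveOnCompactOpens

section PadicPlane

variable (p : ℕ) [Fact p.Prime]

lemma pScale_eq_smul (j : ℤ) (U : Set (ℚ_[p] × ℚ_[p])) : pScale p j U = (p : ℚ_[p]) ^ j • U :=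
  rfl

lemma padic_p_ne_zero : (p : ℚ_[p]) ≠ 0 :=
  Nat.cast_ne_zero.mpr (Fact.out : p.Prime).ne_zero

def shell (j : ℤ) : Set (ℚ_[p] × ℚ_[p]) := sphere 0 ((p : ℝ) ^ (-j))

lemma X0_eq_shell_zero : X0 p = shell p 0 := by
  ext ⟨x, y⟩
  simp only [X0, shell, mem_sphere_zero_iff_norm, Prod.norm_mk, neg_zero, zpow_zero]
  constructor
  · rintro ⟨hx, hy, h | h⟩
    exacts [h ▸ max_eq_left (h ▸ hy), h ▸ max_eq_right (h ▸ hx)]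
  · intro h
    exact ⟨h ▸ le_max_left .., h ▸ le_max_right .., (max_choice ..).imp (h ▸ ·.symm) (h ▸ ·.symm)⟩

lemma zpow_smul_shell (j k : ℤ) : (p : ℚ_[p]) ^ k • shell p j = shell p (j + k) := by
  rw [shell, smul_sphere' (zpow_ne_zero k (padic_p_ne_zero p)), smul_zero, Padic.norm_p_zpow,
    ← zpow_add₀ (by exact_mod_cast (Fact.out : p.Prime).ne_zero), shell, neg_add, add_comm]

lemma isOpen_shell (j : ℤ) : IsOpen (shell p j) :=
  IsUltrametricDist.isOpen_sphere 0
    (zpow_ne_zero _ (by exact_mod_cast (Fact.out : p.Prime).ne_zero))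

lemma pairwise_disjoint_shell : Pairwise (Disjoint on shell p) := by
  intro j k hjk
  refine Set.disjoint_left.mpr fun v hj hk => hjk ?_
  rw [shell, mem_sphere_zero_iff_norm] at hj hk
  exact neg_injective (zpow_right_injective₀ (by exact_mod_cast (Fact.out : p.Prime).pos)
    (by exact_mod_cast (Fact.out : p.Prime).ne_one) (hj.symm.trans hk))

lemma X_subset_iUnion_shell : X p ⊆ ⋃ j, shell p j := by
  intro v (hv : v ≠ 0)
  obtain ⟨x, hx, hvx⟩ : ∃ x ∈ ({v.1, v.2} : Set ℚ_[p]), ‖v‖ = ‖x‖ := by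
    rcases max_choice ‖v.1‖ ‖v.2‖ with h | h
    exacts [⟨v.1, by simp, h⟩, ⟨v.2, by simp, h⟩]
  have hx0 : x ≠ 0 := by
    rintro rfl
    exact hv (norm_eq_zero.mp (hvx.trans norm_zero))
  exact Set.mem_iUnion.mpr ⟨x.valuation, by
    rw [shell, mem_sphere_zero_iff_norm, hvx, Padic.norm_eq_zpow_neg_valuation hx0]⟩

end PadicPlane

section Extension

variable {p : ℕ} [Fact p.Prime] {A : Type*} [AddCommGroup A]

lemma IsCompactOpen.smul {U : Set (ℚ_[p] × ℚ_[p])} (hU : IsCompactOpen p U) {c : ℚ_[p]}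
    (hc : c ≠ 0) : IsCompactOpen p (c • U) := by
  refine ⟨hU.1.smul c, hU.2.1.smul₀ hc, ?_⟩
  rintro _ ⟨v, hv, rfl⟩
  exact smul_ne_zero hc (hU.2.2 hv)

lemma IsPInvariant.map_zpow_smul {μ : Set (ℚ_[p] × ℚ_[p]) → A} (hμ : IsPInvariant p μ) (n : ℤ)
    {U : Set (ℚ_[p] × ℚ_[p])} (hU : IsCompactOpen p U) : μ ((p : ℚ_[p]) ^ n • U) = μ U := by
  have hstep (k : ℤ) : μ ((p : ℚ_[p]) ^ (k + 1) • U) = μ ((p : ℚ_[p]) ^ k • U) := by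
    rw [← hμ _ (hU.smul (zpow_ne_zero k (padic_p_ne_zero p))), pScale_eq_smul, smul_smul,
      ← zpow_add₀ (padic_p_ne_zero p), add_comm]
  induction n using Int.induction_on with
  | zero => rw [zpow_zero, one_smul]
  | succ k ih => rw [hstep, ih]
  | pred k ih => rw [← hstep, sub_add_cancel, ih]

lemma isCompact_zpow_smul_inter_shell {U : Set (ℚ_[p] × ℚ_[p])} (hU : IsCompact U) (j : ℤ) :
    IsCompact ((p : ℚ_[p]) ^ (-j) • (U ∩ shell p j)) :=
  (hU.inter_right isClosed_sphere).smul _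

lemma isOpen_zpow_smul_inter_shell {U : Set (ℚ_[p] × ℚ_[p])} (hU : IsOpen U) (j : ℤ) :
    IsOpen ((p : ℚ_[p]) ^ (-j) • (U ∩ shell p j)) :=
  (hU.inter (isOpen_shell p j)).smul₀ (zpow_ne_zero _ (padic_p_ne_zero p))

lemma zpow_smul_inter_shell_subset_X0 (U : Set (ℚ_[p] × ℚ_[p])) (j : ℤ) :
    (p : ℚ_[p]) ^ (-j) • (U ∩ shell p j) ⊆ X0 p := by
  rw [X0_eq_shell_zero, ← add_neg_cancel j, ← zpow_smul_shell]
  exact Set.smul_set_mono Set.inter_subset_right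

variable (p) in
noncomputable def scalingExtension (μ₀ : Set (ℚ_[p] × ℚ_[p]) → A) (U : Set (ℚ_[p] × ℚ_[p])) : A :=
  ∑ᶠ j : ℤ, μ₀ ((p : ℚ_[p]) ^ (-j) • (U ∩ shell p j))

variable {μ₀ : Set (ℚ_[p] × ℚ_[p]) → A}

lemma scalingExtension_of_subset_X0 (hμ₀ : μ₀ ∅ = 0) {U : Set (ℚ_[p] × ℚ_[p])} (hU : U ⊆ X0 p) :
    scalingExtension p μ₀ U = μ₀ U := by
  rw [X0_eq_shell_zero] at hU
  have hoff (j : ℤ) (hj : j ≠ 0) : μ₀ ((p : ℚ_[p]) ^ (-j) • (U ∩ shell p j)) = 0 := by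
    rw [((pairwise_disjoint_shell p hj.symm).mono_left hU).inter_eq, Set.smul_set_empty, hμ₀]
  rw [scalingExtension, finsum_eq_single _ 0 hoff, neg_zero, zpow_zero, one_smul,
    Set.inter_eq_left.mpr hU]

lemma finite_support_scalingExtension (hμ₀ : μ₀ ∅ = 0) {U : Set (ℚ_[p] × ℚ_[p])}
    (hU : IsCompactOpen p U) :
    (support fun j : ℤ => μ₀ ((p : ℚ_[p]) ^ (-j) • (U ∩ shell p j))).Finite := by
  refine (hU.1.finite_setOf_inter_nonempty (isOpen_shell p) (pairwise_disjoint_shell p)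
    (hU.2.2.trans (X_subset_iUnion_shell p))).subset fun j hj => ?_
  by_contra hempty
  rw [Set.mem_ofPred_eq, Set.not_nonempty_iff_eq_empty] at hempty
  exact hj (by simp only [hempty, Set.smul_set_empty, hμ₀])

lemma isDistribution_scalingExtension (hμ₀ : IsAdditiveOnCompactOpens (X0 p) μ₀) :
    IsDistribution p (scalingExtension p μ₀) := by
  intro U V hU hV hUV
  have hpiece (W : Set (ℚ_[p] × ℚ_[p])) (hW : IsCompactOpen p W) (j : ℤ) :
      IsCompact ((p : ℚ_[p]) ^ (-j) • (W ∩ shell p j)) ∧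
        IsOpen ((p : ℚ_[p]) ^ (-j) • (W ∩ shell p j)) ∧
        (p : ℚ_[p]) ^ (-j) • (W ∩ shell p j) ⊆ X0 p :=
    ⟨isCompact_zpow_smul_inter_shell hW.1 j, isOpen_zpow_smul_inter_shell hW.2.1 j,
      zpow_smul_inter_shell_subset_X0 W j⟩
  have hsplit (j : ℤ) : μ₀ ((p : ℚ_[p]) ^ (-j) • ((U ∪ V) ∩ shell p j)) =
      μ₀ ((p : ℚ_[p]) ^ (-j) • (U ∩ shell p j)) + μ₀ ((p : ℚ_[p]) ^ (-j) • (V ∩ shell p j)) := by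
    rw [Set.union_inter_distrib_right, Set.smul_set_union]
    refine hμ₀ _ _ (hpiece U hU j) (hpiece V hV j) ?_
    rw [← Set.image_smul, ← Set.image_smul,
      Set.disjoint_image_iff (smul_right_injective _ (zpow_ne_zero _ (padic_p_ne_zero p)))]
    exact hUV.mono Set.inter_subset_left Set.inter_subset_left
  simp only [scalingExtension]
  rw [finsum_congr hsplit, finsum_add_distrib (finite_support_scalingExtension hμ₀.map_empty hU)
    (finite_support_scalingExtension hμ₀.map_empty hV)]

lemma isPInvariant_scalingExtension : IsPInvariant p (scalingExtension p μ₀) := by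
  intro U _
  have hshift (j : ℤ) : (p : ℚ_[p]) ^ (-j) • (pScale p 1 U ∩ shell p j) =
      (p : ℚ_[p]) ^ (-(j - 1)) • (U ∩ shell p (j - 1)) := by
    rw [pScale_eq_smul, ← sub_add_cancel j 1, ← zpow_smul_shell,
      ← Set.smul_set_inter₀ (zpow_ne_zero 1 (padic_p_ne_zero p)), smul_smul,
      ← zpow_add₀ (padic_p_ne_zero p), sub_add_cancel]
    congr 2; ring
  simp only [scalingExtension, hshift]
  exact finsum_comp_equiv (Equiv.subRight (1 : ℤ))
    (f := fun j => μ₀ ((p : ℚ_[p]) ^ (-j) • (U ∩ shell p j)))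

lemma eq_scalingExtension {μ : Set (ℚ_[p] × ℚ_[p]) → A} (hμ : IsDistribution p μ)
    (hinv : IsPInvariant p μ)
    (hext : ∀ U : Set (ℚ_[p] × ℚ_[p]), IsCompact U → IsOpen U → U ⊆ X0 p → μ U = μ₀ U)
    {U : Set (ℚ_[p] × ℚ_[p])} (hU : IsCompactOpen p U) : μ U = scalingExtension p μ₀ U := by
  have hadd : IsAdditiveOnCompactOpens (X p) μ := hμ
  rw [hadd.eq_finsum_inter (isOpen_shell p) (fun _ => isClosed_sphere) (pairwise_disjoint_shell p)
    hU.1 hU.2.1 hU.2.2 (hU.2.2.trans (X_subset_iUnion_shell p))]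
  refine finsum_congr fun j => ?_
  have hpiece : IsCompactOpen p (U ∩ shell p j) :=
    ⟨hU.1.inter_right isClosed_sphere, hU.2.1.inter (isOpen_shell p j),
      Set.inter_subset_left.trans hU.2.2⟩
  rw [← hinv.map_zpow_smul (-j) hpiece, hext _ (isCompact_zpow_smul_inter_shell hU.1 j)
    (isOpen_zpow_smul_inter_shell hU.2.1 j) (zpow_smul_inter_shell_subset_X0 U j)]

end Extension

/-- Every finitely additive `A`-valued function `μ₀` on the compact open subsets of
`ℚ_p × ℚ_p` contained in `X₀` extends uniquely to a `p`-invariant `A`-valued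
distribution `μ` on `X` (uniqueness meaning: any two such extensions agree on all
compact open subsets of `X`). -/
theorem stmt3 (p : ℕ) [Fact p.Prime] {A : Type*} [AddCommGroup A]
    (μ₀ : Set (ℚ_[p] × ℚ_[p]) → A)
    (hμ₀ : ∀ U V : Set (ℚ_[p] × ℚ_[p]), IsCompact U → IsOpen U → U ⊆ X0 p →
      IsCompact V → IsOpen V → V ⊆ X0 p → Disjoint U V → μ₀ (U ∪ V) = μ₀ U + μ₀ V) :
    ∃ μ : Set (ℚ_[p] × ℚ_[p]) → A,
      (IsDistribution p μ ∧ IsPInvariant p μ ∧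
        ∀ U : Set (ℚ_[p] × ℚ_[p]), IsCompact U → IsOpen U → U ⊆ X0 p → μ U = μ₀ U) ∧
      ∀ μ' : Set (ℚ_[p] × ℚ_[p]) → A,
        (IsDistribution p μ' ∧ IsPInvariant p μ' ∧
          ∀ U : Set (ℚ_[p] × ℚ_[p]), IsCompact U → IsOpen U → U ⊆ X0 p → μ' U = μ₀ U) →
        ∀ U, IsCompactOpen p U → μ' U = μ U := by
  have hμ₀' : IsAdditiveOnCompactOpens (X0 p) μ₀ := fun U V hU hV =>
    hμ₀ U V hU.1 hU.2.1 hU.2.2 hV.1 hV.2.1 hV.2.2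
  refine ⟨scalingExtension p μ₀, ⟨isDistribution_scalingExtension hμ₀',
    isPInvariant_scalingExtension, fun U _ _ hU => scalingExtension_of_subset_X0 hμ₀'.map_empty hU⟩,
    fun μ ⟨hμ, hinv, hext⟩ U hU => eq_scalingExtension hμ hinv hext hU⟩
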